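/- Let $K_1 \subseteq \mathbb{R}^m$ and $K_2 \subseteq \mathbb{R}^n$ be compact sets, let $(H_\varepsilon)_{\varepsilon \in (0,1]}$ be a moderate net of smooth functions on $\mathbb{R}^m \times \mathbb{R}^n$ with $\mathrm{supp}\, H_\varepsilon \subseteq K_1 \times K_2$ for all $\varepsilon$, and let $(f_\varepsilon)$ be a moderate net of smooth functions on $\mathbb{R}^n$. Then the net $\left( x \mapsto \int_{K_2} H_\varepsilon(x,y) f_\varepsilon(y)\, \mathrm{d}y \right)$ is a moderate net of smooth functions on $\mathbb{R}^m$; and if moreover $(f_\varepsilon)$ is negligible, then this net is negligible. In particular, the generalized integral operator with compactly supported kernel is well defined at the level of representatives. -/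

import Mathlib

open MeasureTheory Set Filter

noncomputable def dirDeriv {E : Type*} [NormedAddCommGroup E] [NormedSpace ℝ E]
    (v : E) (f : E → ℂ) : E → ℂ := fun x => fderiv ℝ f x v

noncomputable def itDeriv {E : Type*} [NormedAddCommGroup E] [NormedSpace ℝ E] :
    List E → (E → ℂ) → E → ℂ
  | [] => fun f => f
  | v :: vs => fun f => itDeriv vs (dirDeriv v f)

/-- The standard basis directions of the product space `ℝ^m × ℝ^n`. -/
def prodDirs (m n : ℕ) : Set ((Fin m → ℝ) × (Fin n → ℝ)) :=
  {v | (∃ i, v = (Pi.single i (1:ℝ), 0)) ∨ ∃ j, v = (0, Pi.single j (1:ℝ))}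

/-- The standard basis directions of `ℝ^d`. -/
def stdDirs (d : ℕ) : Set (Fin d → ℝ) := {v | ∃ i, v = Pi.single i (1:ℝ)}

/-- The seminorm `p_{A,l}(f)`: the sup over `x ∈ A` and over all partial derivatives
(iterated directional derivatives along basis directions from `B`) of order `≤ l`. -/
noncomputable def pSemi {E : Type*} [NormedAddCommGroup E] [NormedSpace ℝ E]
    (B A : Set E) (l : ℕ) (f : E → ℂ) : ℝ :=
  sSup {r | ∃ vs : List E, vs.length ≤ l ∧ (∀ v ∈ vs, v ∈ B) ∧ ∃ x ∈ A, r = ‖itDeriv vs f x‖}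

/-- A net `(f_ε)_{ε ∈ (0,1]}` is moderate if every seminorm grows at most
polynomially in `1/ε` as `ε → 0`. -/
def IsModerate {E : Type*} [NormedAddCommGroup E] [NormedSpace ℝ E]
    (B : Set E) (f : ℝ → E → ℂ) : Prop :=
  ∀ A : Set E, IsCompact A → ∀ l : ℕ, ∃ q : ℕ, ∃ C > (0:ℝ), ∃ ε₀ ∈ Ioc (0:ℝ) 1,
    ∀ ε ∈ Ioc (0:ℝ) 1, ε ≤ ε₀ → pSemi B A l (f ε) ≤ C * ε ^ (-(q:ℤ))

/-- A net `(f_ε)_{ε ∈ (0,1]}` is negligible if every seminorm is `O(ε^p)` for all `p`. -/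
def IsNegligible {E : Type*} [NormedAddCommGroup E] [NormedSpace ℝ E]
    (B : Set E) (f : ℝ → E → ℂ) : Prop :=
  ∀ A : Set E, IsCompact A → ∀ l : ℕ, ∀ p : ℕ, ∃ C > (0:ℝ), ∃ ε₀ ∈ Ioc (0:ℝ) 1,
    ∀ ε ∈ Ioc (0:ℝ) 1, ε ≤ ε₀ → pSemi B A l (f ε) ≤ C * ε ^ p

section Aux

open scoped ContDiff

variable {E : Type*} [NormedAddCommGroup E] [NormedSpace ℝ E]

lemma dirDeriv_contDiff {g : E → ℂ} (hg : ContDiff ℝ (⊤:ℕ∞) g) (v : E) :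
    ContDiff ℝ (⊤:ℕ∞) (dirDeriv v g) := by
  have h : ContDiff ℝ ∞ (fderiv ℝ g) := (contDiff_infty_iff_fderiv.1 hg).2
  exact h.clm_apply contDiff_const

lemma itDeriv_contDiff {g : E → ℂ} (hg : ContDiff ℝ (⊤:ℕ∞) g) (vs : List E) :
    ContDiff ℝ (⊤:ℕ∞) (itDeriv vs g) := by
  induction vs generalizing g with
  | nil => exact hg
  | cons v vs ih => exact ih (dirDeriv_contDiff hg v)

lemma listSet_finite {B : Set E} (hB : B.Finite) (l : ℕ) :
    {vs : List E | vs.length ≤ l ∧ ∀ v ∈ vs, v ∈ B}.Finite := by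
  have : Finite B := hB.to_subtype
  have h1 : {ws : List B | ws.length ≤ l}.Finite := List.finite_length_le _ l
  refine (h1.image (List.map (Subtype.val))).subset ?_
  rintro vs ⟨hlen, hmem⟩
  refine ⟨vs.attach.map (fun x => (⟨x.1, hmem _ x.2⟩ : B)), by simpa using hlen, ?_⟩
  simp [List.map_map, Function.comp_def]

lemma pSemi_bddAbove {B A : Set E} (hB : B.Finite) (hA : IsCompact A) (l : ℕ)
    {g : E → ℂ} (hg : ContDiff ℝ (⊤:ℕ∞) g) :
    BddAbove {r | ∃ vs : List E, vs.length ≤ l ∧ (∀ v ∈ vs, v ∈ B) ∧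
      ∃ x ∈ A, r = ‖itDeriv vs g x‖} := by
  have hfin := listSet_finite hB l
  have hsub : {r | ∃ vs : List E, vs.length ≤ l ∧ (∀ v ∈ vs, v ∈ B) ∧
      ∃ x ∈ A, r = ‖itDeriv vs g x‖} ⊆
      ⋃ vs ∈ {vs : List E | vs.length ≤ l ∧ ∀ v ∈ vs, v ∈ B},
        (fun x => ‖itDeriv vs g x‖) '' A := by
    rintro r ⟨vs, hlen, hmem, x, hx, rfl⟩
    exact mem_biUnion ⟨hlen, hmem⟩ ⟨x, hx, rfl⟩
  refine BddAbove.mono hsub ?_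
  rw [hfin.bddAbove_biUnion]
  intro vs _
  exact (hA.image ((itDeriv_contDiff hg vs).continuous.norm)).bddAbove

lemma norm_le_pSemi {B A : Set E} (hB : B.Finite) (hA : IsCompact A) (l : ℕ)
    {g : E → ℂ} (hg : ContDiff ℝ (⊤:ℕ∞) g) (vs : List E) (hlen : vs.length ≤ l)
    (hmem : ∀ v ∈ vs, v ∈ B) {x : E} (hx : x ∈ A) :
    ‖itDeriv vs g x‖ ≤ pSemi B A l g :=
  le_csSup (pSemi_bddAbove hB hA l hg) ⟨vs, hlen, hmem, x, hx, rfl⟩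

lemma pSemi_nonneg (B A : Set E) (l : ℕ) (g : E → ℂ) : 0 ≤ pSemi B A l g :=
  Real.sSup_nonneg (by rintro r ⟨vs, _, _, x, _, rfl⟩; exact norm_nonneg _)

lemma stdDirs_finite (d : ℕ) : (stdDirs d).Finite := by
  have : stdDirs d = Set.range (fun i : Fin d => Pi.single i (1:ℝ)) := by
    ext v; simp [stdDirs, eq_comm]
  rw [this]; exact Set.finite_range _

lemma prodDirs_finite (m n : ℕ) : (prodDirs m n).Finite := by
  have : prodDirs m n = Set.range (fun i : Fin m => ((Pi.single i (1:ℝ), 0) :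
      (Fin m → ℝ) × (Fin n → ℝ))) ∪ Set.range (fun j : Fin n => ((0, Pi.single j (1:ℝ)) :
      (Fin m → ℝ) × (Fin n → ℝ))) := by
    ext v; simp [prodDirs, eq_comm]
  rw [this]; exact (Set.finite_range _).union (Set.finite_range _)

end Aux

section Param

set_option synthInstance.maxHeartbeats 1000000
set_option maxHeartbeats 1000000

open scoped ContDiff

variable {m n : ℕ}

/-- Differentiation under the integral sign, for a continuously differentiable integrand
with compact integration domain. -/
lemma hasFDerivAt_setIntegral {F : Type*} [NormedAddCommGroup F] [NormedSpace ℝ F]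
    [CompleteSpace F] {S₂ : Set (Fin n → ℝ)} (hS₂ : IsCompact S₂)
    (Φ : (Fin m → ℝ) × (Fin n → ℝ) → F) (hΦ : Continuous Φ)
    (Φ' : (Fin m → ℝ) × (Fin n → ℝ) → (Fin m → ℝ) →L[ℝ] F) (hΦ' : Continuous Φ')
    (hd : ∀ x y, HasFDerivAt (fun x' => Φ (x', y)) (Φ' (x, y)) x)
    (x₀ : Fin m → ℝ) :
    HasFDerivAt (fun x => ∫ y in S₂, Φ (x, y)) (∫ y in S₂, Φ' (x₀, y)) x₀ := by
  obtain ⟨M, hM⟩ := ((isCompact_closedBall x₀ 1).prod hS₂).exists_bound_of_continuousOn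
    hΦ'.continuousOn
  exact hasFDerivAt_integral_of_dominated_of_fderiv_le
    (F := fun x y => Φ (x, y)) (F' := fun x y => Φ' (x, y)) (bound := fun _ => M) (Metric.ball_mem_nhds x₀ one_pos)
    (Eventually.of_forall fun x =>
      (hΦ.comp (continuous_const.prodMk continuous_id)).aestronglyMeasurable)
    ((hΦ.comp (continuous_const.prodMk continuous_id)).continuousOn.integrableOn_compact hS₂)
    ((hΦ'.comp (continuous_const.prodMk continuous_id)).aestronglyMeasurable)
    (by
      filter_upwards [ae_restrict_mem hS₂.measurableSet] with y hy x hx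
      exact hM (x, y) ⟨Metric.ball_subset_closedBall hx, hy⟩)
    (integrableOn_const hS₂.measure_lt_top.ne)
    (Eventually.of_forall fun y x _ => hd x y)

lemma partial_hasFDerivAt {F : Type*} [NormedAddCommGroup F] [NormedSpace ℝ F]
    (G : (Fin m → ℝ) × (Fin n → ℝ) → F) (hG : ContDiff ℝ (⊤:ℕ∞) G)
    (x : Fin m → ℝ) (y : Fin n → ℝ) :
    HasFDerivAt (fun x' => G (x', y))
      ((fderiv ℝ G (x, y)).comp (ContinuousLinearMap.inl ℝ (Fin m → ℝ) (Fin n → ℝ))) x := by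
  have h1 : HasFDerivAt G (fderiv ℝ G (x, y)) (x, y) :=
    (hG.differentiable (by simp) (x, y)).hasFDerivAt
  exact h1.comp x (hasFDerivAt_prodMk_left x y)

lemma contDiff_setIntegral {S₂ : Set (Fin n → ℝ)} (hS₂ : IsCompact S₂) (N : ℕ) :
    ∀ {F : Type} [NormedAddCommGroup F] [NormedSpace ℝ F] [CompleteSpace F]
    (G : (Fin m → ℝ) × (Fin n → ℝ) → F), ContDiff ℝ (⊤:ℕ∞) G →
    ContDiff ℝ (N : WithTop ℕ∞) (fun x => ∫ y in S₂, G (x, y)) := by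
  induction N with
  | zero =>
    intro F _ _ _ G hG
    rw [show ((0:ℕ) : WithTop ℕ∞) = 0 from rfl, contDiff_zero]
    have hdiff : Differentiable ℝ (fun x => ∫ y in S₂, G (x, y)) := fun x₀ =>
      (hasFDerivAt_setIntegral hS₂ G hG.continuous _
        ((((contDiff_infty_iff_fderiv.1 hG).2).clm_comp contDiff_const).continuous)
        (fun x y => partial_hasFDerivAt G hG x y) x₀).differentiableAt
    exact hdiff.continuous
  | succ N ih =>
    intro F _ _ _ G hG
    set Ψ : (Fin m → ℝ) × (Fin n → ℝ) → (Fin m → ℝ) →L[ℝ] F := fun p =>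
      (fderiv ℝ G p).comp (ContinuousLinearMap.inl ℝ (Fin m → ℝ) (Fin n → ℝ)) with hΨdef
    have hΨ : ContDiff ℝ (⊤:ℕ∞) Ψ :=
      ((contDiff_infty_iff_fderiv.1 hG).2).clm_comp contDiff_const
    have hder : ∀ x₀, HasFDerivAt (fun x => ∫ y in S₂, G (x, y)) (∫ y in S₂, Ψ (x₀, y)) x₀ :=
      fun x₀ => hasFDerivAt_setIntegral hS₂ G hG.continuous Ψ hΨ.continuous
        (fun x y => partial_hasFDerivAt G hG x y) x₀
    have hfd : (fderiv ℝ (fun x => ∫ y in S₂, G (x, y))) = fun x => ∫ y in S₂, Ψ (x, y) :=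
      funext fun x₀ => (hder x₀).fderiv
    rw [show ((N+1:ℕ) : WithTop ℕ∞) = (N : WithTop ℕ∞) + 1 by push_cast; rfl,
      contDiff_succ_iff_fderiv]
    refine ⟨fun x₀ => (hder x₀).differentiableAt, by simp, ?_⟩
    rw [hfd]
    exact ih Ψ hΨ

lemma dirDeriv_setIntegral {S₂ : Set (Fin n → ℝ)} (hS₂ : IsCompact S₂)
    (G : (Fin m → ℝ) × (Fin n → ℝ) → ℂ) (hG : ContDiff ℝ (⊤:ℕ∞) G)
    (φ : (Fin n → ℝ) → ℂ) (hφ : Continuous φ) (v : Fin m → ℝ) :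
    dirDeriv v (fun x => ∫ y in S₂, G (x, y) * φ y)
      = fun x => ∫ y in S₂, dirDeriv (v, (0:Fin n → ℝ)) G (x, y) * φ y := by
  funext x₀
  set Φ' : (Fin m → ℝ) × (Fin n → ℝ) → (Fin m → ℝ) →L[ℝ] ℂ := fun p =>
    φ p.2 • ((fderiv ℝ G p).comp (ContinuousLinearMap.inl ℝ (Fin m → ℝ) (Fin n → ℝ))) with hΦ'def
  have hΦ'c : Continuous Φ' :=
    (hφ.comp continuous_snd).smul
      ((((contDiff_infty_iff_fderiv.1 hG).2).clm_comp contDiff_const).continuous)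
  have hd : ∀ x y, HasFDerivAt (fun x' => G (x', y) * φ y) (Φ' (x, y)) x := fun x y =>
    (partial_hasFDerivAt G hG x y).mul_const (φ y)
  have hΦc : Continuous (fun p : (Fin m → ℝ) × (Fin n → ℝ) => G p * φ p.2) :=
    hG.continuous.mul (hφ.comp continuous_snd)
  have hk := hasFDerivAt_setIntegral hS₂ (fun p => G p * φ p.2) hΦc Φ' hΦ'c hd x₀
  have hint : IntegrableOn (fun y => Φ' (x₀, y)) S₂ volume :=
    (hΦ'c.comp (continuous_const.prodMk continuous_id)).continuousOn.integrableOn_compact hS₂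
  have h1 : dirDeriv v (fun x => ∫ y in S₂, G (x, y) * φ y) x₀ = (∫ y in S₂, Φ' (x₀, y)) v := by
    rw [dirDeriv, hk.fderiv]
  rw [h1, ContinuousLinearMap.integral_apply hint]
  refine integral_congr_ae (Eventually.of_forall fun y => ?_)
  simp only [hΦ'def, ContinuousLinearMap.smul_apply, ContinuousLinearMap.comp_apply,
    ContinuousLinearMap.inl_apply, dirDeriv, smul_eq_mul]
  ring

lemma itDeriv_setIntegral {S₂ : Set (Fin n → ℝ)} (hS₂ : IsCompact S₂)
    (φ : (Fin n → ℝ) → ℂ) (hφ : Continuous φ) (vs : List (Fin m → ℝ)) :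
    ∀ (G : (Fin m → ℝ) × (Fin n → ℝ) → ℂ), ContDiff ℝ (⊤:ℕ∞) G →
    itDeriv vs (fun x => ∫ y in S₂, G (x, y) * φ y)
      = fun x => ∫ y in S₂, itDeriv (vs.map (fun v => (v, (0:Fin n → ℝ)))) G (x, y) * φ y := by
  induction vs with
  | nil => intro G hG; rfl
  | cons v vs ih =>
    intro G hG
    show itDeriv vs (dirDeriv v fun x => ∫ y in S₂, G (x, y) * φ y) = _
    rw [dirDeriv_setIntegral hS₂ G hG φ hφ v,
      ih _ (dirDeriv_contDiff hG (v, (0:Fin n → ℝ)))]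
    rfl

lemma pSemi_setIntegral_le {S₂ : Set (Fin n → ℝ)} (hS₂ : IsCompact S₂)
    (G : (Fin m → ℝ) × (Fin n → ℝ) → ℂ) (hG : ContDiff ℝ (⊤:ℕ∞) G)
    (φ : (Fin n → ℝ) → ℂ) (hφ : ContDiff ℝ (⊤:ℕ∞) φ)
    {A : Set (Fin m → ℝ)} (hA : IsCompact A) (l : ℕ) :
    pSemi (stdDirs m) A l (fun x => ∫ y in S₂, G (x, y) * φ y)
      ≤ (volume S₂).toReal * (pSemi (prodDirs m n) (A ×ˢ S₂) l G * pSemi (stdDirs n) S₂ 0 φ) := by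
  have hPG := pSemi_nonneg (prodDirs m n) (A ×ˢ S₂) l G
  have hPφ := pSemi_nonneg (stdDirs n) S₂ 0 φ
  have hV : (0:ℝ) ≤ (volume S₂).toReal := ENNReal.toReal_nonneg
  apply Real.sSup_le _ (by positivity)
  rintro r ⟨vs, hlen, hmem, x, hx, rfl⟩
  have := itDeriv_setIntegral hS₂ φ hφ.continuous vs G hG
  rw [this]
  have hbound : ∀ y ∈ S₂,
      ‖itDeriv (vs.map (fun v => (v, (0:Fin n → ℝ)))) G (x, y) * φ y‖
        ≤ pSemi (prodDirs m n) (A ×ˢ S₂) l G * pSemi (stdDirs n) S₂ 0 φ := by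
    intro y hy
    rw [norm_mul]
    refine mul_le_mul ?_ ?_ (norm_nonneg _) hPG
    · refine norm_le_pSemi (prodDirs_finite m n) (hA.prod hS₂) l hG _ (by simpa using hlen)
        ?_ (Set.mk_mem_prod hx hy)
      intro w hw
      rw [List.mem_map] at hw
      obtain ⟨v, hv, rfl⟩ := hw
      obtain ⟨i, rfl⟩ := hmem v hv
      exact Or.inl ⟨i, rfl⟩
    · exact norm_le_pSemi (stdDirs_finite n) hS₂ 0 hφ [] le_rfl (by simp) hy
  calc ‖∫ y in S₂, itDeriv (vs.map (fun v => (v, (0:Fin n → ℝ)))) G (x, y) * φ y‖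
      ≤ (pSemi (prodDirs m n) (A ×ˢ S₂) l G * pSemi (stdDirs n) S₂ 0 φ) * (volume S₂).toReal :=
        norm_setIntegral_le_of_norm_le_const hS₂.measure_lt_top hbound
    _ = (volume S₂).toReal * (pSemi (prodDirs m n) (A ×ˢ S₂) l G * pSemi (stdDirs n) S₂ 0 φ) := by
        ring

end Param

/-- The generalized integral operator with compactly supported moderate kernel net is
well defined at the level of representatives: it maps moderate nets to moderate nets
and, if the argument net is negligible, the image net is negligible. -/
theorem integral_operator_well_defined
    {m n : ℕ} (S₁ : Set (Fin m → ℝ)) (S₂ : Set (Fin n → ℝ))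
    (hS₁ : IsCompact S₁) (hS₂ : IsCompact S₂)
    (H : ℝ → (Fin m → ℝ) × (Fin n → ℝ) → ℂ)
    (hsm : ∀ ε ∈ Ioc (0:ℝ) 1, ContDiff ℝ (⊤:ℕ∞) (H ε))
    (hsupp : ∀ ε ∈ Ioc (0:ℝ) 1, Function.support (H ε) ⊆ S₁ ×ˢ S₂)
    (hmod : IsModerate (prodDirs m n) H)
    (f : ℝ → (Fin n → ℝ) → ℂ)
    (hfsm : ∀ ε ∈ Ioc (0:ℝ) 1, ContDiff ℝ (⊤:ℕ∞) (f ε))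
    (hfmod : IsModerate (stdDirs n) f) :
    (∀ ε ∈ Ioc (0:ℝ) 1, ContDiff ℝ (⊤:ℕ∞) (fun x => ∫ y in S₂, H ε (x, y) * f ε y)) ∧
    IsModerate (stdDirs m) (fun ε x => ∫ y in S₂, H ε (x, y) * f ε y) ∧
    (IsNegligible (stdDirs n) f →
      IsNegligible (stdDirs m) (fun ε x => ∫ y in S₂, H ε (x, y) * f ε y)) := by
  have hVnn : (0:ℝ) ≤ (volume S₂).toReal := ENNReal.toReal_nonneg
  refine ⟨?_, ?_, ?_⟩
  · -- smoothness
    intro ε hε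
    have hGsm : ContDiff ℝ (⊤:ℕ∞) (fun p : (Fin m → ℝ) × (Fin n → ℝ) => H ε p * f ε p.2) :=
      (hsm ε hε).mul ((hfsm ε hε).comp contDiff_snd)
    rw [contDiff_infty]
    intro N
    exact contDiff_setIntegral hS₂ N _ hGsm
  · -- moderate
    intro A hA l
    obtain ⟨q₁, C₁, hC₁, ε₁, hε₁, h₁⟩ := hmod (A ×ˢ S₂) (hA.prod hS₂) l
    obtain ⟨q₂, C₂, hC₂, ε₂, hε₂, h₂⟩ := hfmod S₂ hS₂ 0
    refine ⟨q₁ + q₂, (volume S₂).toReal * (C₁ * C₂) + 1, by positivity,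
      min ε₁ ε₂, ⟨lt_min hε₁.1 hε₂.1, le_trans (min_le_left _ _) hε₁.2⟩, ?_⟩
    intro ε hε hεle
    have hε0 : (0:ℝ) < ε := hε.1
    have hP := pSemi_setIntegral_le hS₂ (H ε) (hsm ε hε) (f ε) (hfsm ε hε) hA l
    have hPG := pSemi_nonneg (prodDirs m n) (A ×ˢ S₂) l (H ε)
    have hPφ := pSemi_nonneg (stdDirs n) S₂ 0 (f ε)
    have hb₁ := h₁ ε hε (le_trans hεle (min_le_left _ _))
    have hb₂ := h₂ ε hε (le_trans hεle (min_le_right _ _))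
    have hz₁ : (0:ℝ) ≤ C₁ * ε ^ (-(q₁:ℤ)) := by positivity
    have hz₂ : (0:ℝ) ≤ C₂ * ε ^ (-(q₂:ℤ)) := by positivity
    calc pSemi (stdDirs m) A l (fun x => ∫ y in S₂, H ε (x, y) * f ε y)
        ≤ (volume S₂).toReal * (pSemi (prodDirs m n) (A ×ˢ S₂) l (H ε)
            * pSemi (stdDirs n) S₂ 0 (f ε)) := hP
      _ ≤ (volume S₂).toReal * ((C₁ * ε ^ (-(q₁:ℤ))) * (C₂ * ε ^ (-(q₂:ℤ)))) := by
          apply mul_le_mul_of_nonneg_left _ hVnn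
          exact mul_le_mul hb₁ hb₂ hPφ hz₁
      _ = ((volume S₂).toReal * (C₁ * C₂)) * ε ^ (-((q₁ + q₂ : ℕ):ℤ)) := by
          rw [show (-((q₁ + q₂ : ℕ):ℤ)) = (-(q₁:ℤ)) + (-(q₂:ℤ)) by push_cast; ring,
            zpow_add₀ (ne_of_gt hε0)]
          ring
      _ ≤ ((volume S₂).toReal * (C₁ * C₂) + 1) * ε ^ (-((q₁ + q₂ : ℕ):ℤ)) := by
          apply mul_le_mul_of_nonneg_right (by linarith) (by positivity)
  · -- negligible
    intro hneg A hA l p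
    obtain ⟨q₁, C₁, hC₁, ε₁, hε₁, h₁⟩ := hmod (A ×ˢ S₂) (hA.prod hS₂) l
    obtain ⟨C₂, hC₂, ε₂, hε₂, h₂⟩ := hneg S₂ hS₂ 0 (p + q₁)
    refine ⟨(volume S₂).toReal * (C₁ * C₂) + 1, by positivity,
      min ε₁ ε₂, ⟨lt_min hε₁.1 hε₂.1, le_trans (min_le_left _ _) hε₁.2⟩, ?_⟩
    intro ε hε hεle
    have hε0 : (0:ℝ) < ε := hε.1
    have hP := pSemi_setIntegral_le hS₂ (H ε) (hsm ε hε) (f ε) (hfsm ε hε) hA l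
    have hPG := pSemi_nonneg (prodDirs m n) (A ×ˢ S₂) l (H ε)
    have hPφ := pSemi_nonneg (stdDirs n) S₂ 0 (f ε)
    have hb₁ := h₁ ε hε (le_trans hεle (min_le_left _ _))
    have hb₂ := h₂ ε hε (le_trans hεle (min_le_right _ _))
    have hz₁ : (0:ℝ) ≤ C₁ * ε ^ (-(q₁:ℤ)) := by positivity
    calc pSemi (stdDirs m) A l (fun x => ∫ y in S₂, H ε (x, y) * f ε y)
        ≤ (volume S₂).toReal * (pSemi (prodDirs m n) (A ×ˢ S₂) l (H ε)
            * pSemi (stdDirs n) S₂ 0 (f ε)) := hP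
      _ ≤ (volume S₂).toReal * ((C₁ * ε ^ (-(q₁:ℤ))) * (C₂ * ε ^ (p + q₁))) := by
          apply mul_le_mul_of_nonneg_left _ hVnn
          exact mul_le_mul hb₁ hb₂ hPφ hz₁
      _ = ((volume S₂).toReal * (C₁ * C₂)) * ε ^ p := by
          have : ε ^ (-(q₁:ℤ)) * ε ^ (p + q₁) = ε ^ p := by
            rw [← zpow_natCast ε (p + q₁), ← zpow_add₀ (ne_of_gt hε0), ← zpow_natCast ε p]
            congr 1
            push_cast
            ring
          rw [← this]
          ring
      _ ≤ ((volume S₂).toReal * (C₁ * C₂) + 1) * ε ^ p := by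
          apply mul_le_mul_of_nonneg_right (by linarith) (by positivity)
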